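/- arXiv:2307.00164 — 2 statements merged into one kernel-verified Lean document; each statement's English description precedes it below -/
import Mathlib

section
/- Let η^ν = b^ν ω (ν = 1,2,3) be a decomposable triplet of 2-forms on a 3-manifold, with b^1 nowhere vanishing. If each η^ν is closed, then there exists a decomposition η^ν = c^ν ω̃ with ω̃ closed; explicitly, ω̃ = η^1 and c^ν = b^ν / b^1 works, and moreover dc^ν ∧ ω̃ = 0 for each ν. -/
/-- The exterior derivative of a 2-form `ω`, evaluated at `x` on `(v₀, v₁, v₂)`. -/
noncomputable def extDer2 {E : Type*} [NormedAddCommGroup E] [NormedSpace ℝ E]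
    (ω : E → E → E → ℝ) (x v₀ v₁ v₂ : E) : ℝ :=
  fderiv ℝ (fun y => ω y v₁ v₂) x v₀ - fderiv ℝ (fun y => ω y v₀ v₂) x v₁
    + fderiv ℝ (fun y => ω y v₀ v₁) x v₂

/-- The wedge product of a 1-form with a 2-form. -/
def wedge12 {E : Type*} [NormedAddCommGroup E] [NormedSpace ℝ E]
    (α : E → E → ℝ) (ω : E → E → E → ℝ) (x v₀ v₁ v₂ : E) : ℝ :=
  α x v₀ * ω x v₁ v₂ - α x v₁ * ω x v₀ v₂ + α x v₂ * ω x v₀ v₁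

/-- If a decomposable triplet of 2-forms `η^ν = b^ν ω` (with `b^1`
nowhere vanishing) is closed, then there is a decomposition `η^ν = c^ν ω̃` with `ω̃`
closed; explicitly `ω̃ = η^1` and `c^ν = b^ν / b^1` works, and moreover
`dc^ν ∧ ω̃ = 0` for each `ν`. (Here index `0 : Fin 3` plays the role of "1".) -/
theorem closed_decomposable_distinct
    {E : Type*} [NormedAddCommGroup E] [NormedSpace ℝ E]
    [FiniteDimensional ℝ E] (hdim : Module.finrank ℝ E = 3)
    (b : Fin 3 → E → ℝ) (ω : E → E → E → ℝ)
    (hb : ∀ ν, ContDiff ℝ (⊤ : ℕ∞) (b ν))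
    (hω : ContDiff ℝ (⊤ : ℕ∞) (fun p : E × E × E => ω p.1 p.2.1 p.2.2))
    (hb0 : ∀ x, b 0 x ≠ 0)
    (hclosed : ∀ ν : Fin 3, ∀ x v₀ v₁ v₂,
      extDer2 (fun y v w => b ν y * ω y v w) x v₀ v₁ v₂ = 0) :
    (∀ ν : Fin 3, ∀ x v w,
      b ν x * ω x v w = (b ν x / b 0 x) * (b 0 x * ω x v w)) ∧
    (∀ x v₀ v₁ v₂, extDer2 (fun y v w => b 0 y * ω y v w) x v₀ v₁ v₂ = 0) ∧
    (∀ ν : Fin 3, ∀ x v₀ v₁ v₂,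
      wedge12 (fun y v => fderiv ℝ (fun z => b ν z / b 0 z) y v)
        (fun y v w => b 0 y * ω y v w) x v₀ v₁ v₂ = 0) := by

  have key : ∀ ν : Fin 3, ∀ y v w, b ν y * ω y v w = (b ν y / b 0 y) * (b 0 y * ω y v w) := by
    intro ν y v w
    rw [div_mul_eq_mul_div, mul_left_comm, mul_div_cancel_left₀ _ (hb0 y)]
  refine ⟨fun ν x v w => key ν x v w, hclosed 0, ?_⟩
  intro ν x v₀ v₁ v₂
  have hbd : ∀ ν : Fin 3, ∀ x : E, DifferentiableAt ℝ (b ν) x :=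
    fun ν x => (hb ν).differentiable (by simp) x
  have hωd : ∀ (v w x : E), DifferentiableAt ℝ (fun y => ω y v w) x := by
    intro v w x
    exact (hω.differentiable (by simp) (x, v, w)).comp x
      (differentiableAt_id.prodMk (differentiableAt_const (v, w)) : DifferentiableAt ℝ (fun y : E => (y, v, w)) x)
  have hWd : ∀ (v w x : E), DifferentiableAt ℝ (fun y => b 0 y * ω y v w) x :=
    fun v w x => (hbd 0 x).mul (hωd v w x)
  have hcd : ∀ x : E, DifferentiableAt ℝ (fun z => b ν z / b 0 z) x :=
    fun x => by simpa only [div_eq_mul_inv, Pi.mul_def, Pi.inv_apply] using (hbd ν x).mul ((hbd 0 x).inv (hb0 x))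
  have hmul : ∀ (v w x u : E),
      fderiv ℝ (fun y => b ν y * ω y v w) x u
        = fderiv ℝ (fun z => b ν z / b 0 z) x u * (b 0 x * ω x v w)
          + (b ν x / b 0 x) * fderiv ℝ (fun y => b 0 y * ω y v w) x u := by
    intro v w x u
    have he : (fun y => b ν y * ω y v w) = fun y => (b ν y / b 0 y) * (b 0 y * ω y v w) := by
      funext y; exact key ν y v w
    rw [he, fderiv_fun_mul (hcd x) (hWd v w x)]
    simp only [ContinuousLinearMap.add_apply, ContinuousLinearMap.smul_apply, smul_eq_mul]
    ring
  have h1 := hclosed ν x v₀ v₁ v₂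
  have h0 := hclosed 0 x v₀ v₁ v₂
  unfold extDer2 at h1 h0
  unfold wedge12
  rw [hmul v₁ v₂ x v₀, hmul v₀ v₂ x v₁, hmul v₀ v₁ x v₂] at h1
  linear_combination h1 - (b ν x / b 0 x) * h0
end

section
/- On ℝ³ with Cartesian coordinates, let η^ν = ρ b^ν dZ^1 ∧ dZ^2 with constants ρ, b^ν, and let U = u ∂/∂Z^1 with constant u. Then: (i) the evolution equation gives ∂_t η^ν = -d(ι_U η^ν) = 0, i.e. the dislocation field is stationary; (ii) Orowan's equation gives ∂_t θ^ν = -ι_U η^ν = -u ρ b^ν dZ^2 ≠ 0 whenever u ρ b^ν ≠ 0. In particular, a stationary dislocation field moving with nonzero velocity changes the lattice coframe, so the lattice evolution cannot be deduced from the evolution of the dislocation field alone. -/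
/-- The exterior derivative of a 1-form `γ`, evaluated at `x` on `(v, w)`. -/
noncomputable def extDer1 {E : Type*} [NormedAddCommGroup E] [NormedSpace ℝ E]
    (γ : E → E → ℝ) (x v w : E) : ℝ :=
  fderiv ℝ (fun y => γ y w) x v - fderiv ℝ (fun y => γ y v) x w

theorem extDer1_eq_zero_of_forall_eq {E : Type*} [NormedAddCommGroup E] [NormedSpace ℝ E]
    {γ : E → E → ℝ} (γ₀ : E → ℝ) (hγ : ∀ y, γ y = γ₀) (x v w : E) :
    extDer1 γ x v w = 0 := by
  simp [extDer1, hγ]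

/-- On `ℝ³`, for the uniform dislocation field
`η^ν = ρ b^ν dZ¹ ∧ dZ²` and constant velocity `U = u ∂/∂Z¹`:
(i) `∂_t η^ν = -d(ι_U η^ν) = 0` (the dislocation field is stationary);
(ii) `-ι_U η^ν = -uρb^ν dZ²`, which is a nonzero 1-form whenever `uρb^ν ≠ 0`.
Hence Orowan's equation `∂_t θ^ν = -ι_U η^ν` changes the lattice coframe even though
the dislocation field is stationary. -/
theorem stationary_dislocation_moving_changes_lattice
    (ρ u : ℝ) (b : Fin 3 → ℝ)
    (η : Fin 3 → (Fin 3 → ℝ) → (Fin 3 → ℝ) → (Fin 3 → ℝ) → ℝ)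
    (U : (Fin 3 → ℝ) → (Fin 3 → ℝ))
    (hη : ∀ ν x v w, η ν x v w = ρ * b ν * (v 0 * w 1 - v 1 * w 0))
    (hU : ∀ x, U x = fun i => if i = 0 then u else 0) :
    (∀ (ν : Fin 3) (x v w : Fin 3 → ℝ),
        extDer1 (fun y p => η ν y (U y) p) x v w = 0) ∧
    (∀ (ν : Fin 3) (x v : Fin 3 → ℝ),
        - η ν x (U x) v = -(u * ρ * b ν) * v 1) ∧
    (∀ ν : Fin 3, u * ρ * b ν ≠ 0 →
        ∃ (x v : Fin 3 → ℝ), - η ν x (U x) v ≠ 0) := by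
  have interior_U : ∀ ν x v, η ν x (U x) v = u * ρ * b ν * v 1 := by
    intro ν x v
    simp only [hU, Fin.isValue, hη, ↓reduceIte, one_ne_zero, zero_mul, sub_zero]
    ring
  refine ⟨fun ν => extDer1_eq_zero_of_forall_eq _ fun y => funext (interior_U ν y),
    fun ν x v => by rw [interior_U]; ring, fun ν h => ⟨0, Pi.single 1 1, ?_⟩⟩
  simpa [interior_U] using h
end
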